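/- Suppose p : K × M → [0,1] satisfies the uniform-message bound E_m E_{k←K} p(k,m) ≤ 2^{-n+t} + η, where m ranges uniformly over {0,1}^n and η ≥ 0. Let M' be any random variable on {0,1}^n with min-entropy at least h (i.e., Pr[M' = m] ≤ 2^{-h} for all m). Then E_{m←M'} E_{k←K} p(k,m) ≤ 2^{-h+t} + 2^{n-h}·η. -/
import Mathlib

theorem stmt_6 {K : Type*} [Fintype K] (n : ℕ) (t h η : ℝ) (hη : 0 ≤ η)
    (μ : K → ℝ) (hμ0 : ∀ k, 0 ≤ μ k) (hμ1 : ∑ k, μ k = 1)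
    (p : K → (Fin n → Bool) → ℝ)
    (hp0 : ∀ k m, 0 ≤ p k m) (hp1 : ∀ k m, p k m ≤ 1)
    (huniform : (1 / 2 ^ n : ℝ) * ∑ m : Fin n → Bool, ∑ k, μ k * p k m
        ≤ (2 : ℝ) ^ (-(n : ℝ) + t) + η)
    (ν : (Fin n → Bool) → ℝ) (hν0 : ∀ m, 0 ≤ ν m) (hν1 : ∑ m, ν m = 1)
    (hmin : ∀ m, ν m ≤ (2 : ℝ) ^ (-h)) :
    ∑ m : Fin n → Bool, ν m * ∑ k, μ k * p k m
      ≤ (2 : ℝ) ^ (-h + t) + (2 : ℝ) ^ ((n : ℝ) - h) * η := by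
  have hg0 : ∀ m : Fin n → Bool, 0 ≤ ∑ k, μ k * p k m := fun m =>
    Finset.sum_nonneg fun k _ => mul_nonneg (hμ0 k) (hp0 k m)
  have h1 : ∑ m : Fin n → Bool, ν m * ∑ k, μ k * p k m
      ≤ (2 : ℝ) ^ (-h) * ∑ m : Fin n → Bool, ∑ k, μ k * p k m := by
    rw [Finset.mul_sum]
    exact Finset.sum_le_sum fun m _ => mul_le_mul_of_nonneg_right (hmin m) (hg0 m)
  have h2 : ∑ m : Fin n → Bool, ∑ k, μ k * p k m
      ≤ (2 : ℝ) ^ (n : ℕ) * ((2 : ℝ) ^ (-(n : ℝ) + t) + η) := by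
    have hpow : (0 : ℝ) < 2 ^ n := by positivity
    have := mul_le_mul_of_nonneg_left huniform (le_of_lt hpow)
    calc ∑ m : Fin n → Bool, ∑ k, μ k * p k m
        = (2:ℝ)^n * ((1 / 2 ^ n : ℝ) * ∑ m : Fin n → Bool, ∑ k, μ k * p k m) := by
          field_simp
      _ ≤ (2:ℝ)^n * ((2 : ℝ) ^ (-(n : ℝ) + t) + η) := this
  calc ∑ m : Fin n → Bool, ν m * ∑ k, μ k * p k m
      ≤ (2 : ℝ) ^ (-h) * ((2 : ℝ) ^ (n : ℕ) * ((2 : ℝ) ^ (-(n : ℝ) + t) + η)) := by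
        refine h1.trans (mul_le_mul_of_nonneg_left h2 ?_)
        positivity
    _ = (2 : ℝ) ^ (-h + t) + (2 : ℝ) ^ ((n : ℝ) - h) * η := by
        rw [← Real.rpow_natCast 2 n, mul_add, ← Real.rpow_add two_pos, mul_add,
          ← Real.rpow_add two_pos, ← mul_assoc, ← Real.rpow_add two_pos]
        ring_nf
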